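/- arXiv:1708.04368 — 4 statements merged into one kernel-verified Lean document; each statement's English description precedes it below -/
import Mathlib

section
/- Let E be a cofinal directed graph and let v be a vertex such that no cycle of E passes through any vertex of H(v) := {w ∈ E⁰ : v ≥ w}. Then E has no cycles at all. -/
/-- `IsPathFrom src rng l v w` means the finite list of edges `l` is a path
from vertex `v` to vertex `w` in the directed graph with source map `src` and
range map `rng`.  The empty list is the trivial path at a vertex (so `v = w`). -/
def IsPathFrom {V E : Type*} (src rng : E → V) (l : List E) (v w : V) : Prop :=
  l.Chain' (fun e f => rng e = src f) ∧
  (∀ e ∈ l.head?, src e = v) ∧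
  (∀ e ∈ l.getLast?, rng e = w) ∧
  (l = [] → v = w)

/-- `v ≥ w`: there is a path from `v` to `w`. -/
def Reaches {V E : Type*} (src rng : E → V) (v w : V) : Prop :=
  ∃ l : List E, IsPathFrom src rng l v w

/-- An infinite path `e₁e₂…` is a sequence of edges with `r(eᵢ) = s(eᵢ₊₁)`. -/
def IsInfPath {V E : Type*} (src rng : E → V) (e : ℕ → E) : Prop :=
  ∀ i, rng (e i) = src (e (i + 1))

/-- A graph is cofinal if every vertex can reach some vertex on every infinite path. -/
def Cofinal {V E : Type*} (src rng : E → V) : Prop :=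
  ∀ (v : V) (e : ℕ → E), IsInfPath src rng e → ∃ i, Reaches src rng v (src (e i))

/-- A sink is a vertex emitting no edges. -/
def IsSink {V E : Type*} (src : E → V) (v : V) : Prop := ∀ e, src e ≠ v

/-- A singular vertex is a sink or an infinite emitter. -/
def IsSingular {V E : Type*} (src : E → V) (v : V) : Prop :=
  IsSink src v ∨ {e | src e = v}.Infinite

/-- The graph has no cycles: no nonempty path begins and ends at the same vertex. -/
def HasNoCycles {V E : Type*} (src rng : E → V) : Prop :=
  ∀ (v : V) (l : List E), l ≠ [] → ¬ IsPathFrom src rng l v v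

/-!
Unwinding a cycle `e₁…eₙ` periodically gives the infinite path `e₁…eₙe₁…eₙ…`. By cofinality `v`
reaches the source of one of its edges, so the cycle passes through a vertex of `H(v)`.
-/

namespace IsPathFrom

variable {V E : Type*} {src rng : E → V} {l : List E} {u w : V}

theorem src_getElem_zero (hp : IsPathFrom src rng l u w) (h : 0 < l.length) : src l[0] = u :=
  hp.2.1 _ (by simp [List.head?_eq_getElem?, h])

theorem rng_getElem_length_sub_one (hp : IsPathFrom src rng l u w) (h : 0 < l.length) :
    rng l[l.length - 1] = w :=
  hp.2.2.1 _ (by simp [List.getLast?_eq_getElem?, h])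

theorem rng_getElem_eq_src_getElem_succ (hp : IsPathFrom src rng l u w) (i : ℕ)
    (hi : i + 1 < l.length) : rng l[i] = src l[i + 1] :=
  List.isChain_iff_getElem.mp hp.1 i hi

theorem rng_getElem_eq_src_getElem_succ_mod (hp : IsPathFrom src rng l u u) (i : ℕ)
    (hi : i < l.length) :
    rng l[i] = src (l[(i + 1) % l.length]'(Nat.mod_lt _ (by omega))) := by
  rcases Nat.lt_or_ge (i + 1) l.length with hlt | hge
  · simpa only [Nat.mod_eq_of_lt hlt] using hp.rng_getElem_eq_src_getElem_succ i hlt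
  · obtain rfl : i = l.length - 1 := by omega
    simp only [Nat.sub_add_cancel (by omega : 1 ≤ l.length), Nat.mod_self]
    rw [hp.rng_getElem_length_sub_one (by omega), hp.src_getElem_zero (by omega)]

theorem isInfPath_getElem_mod (hp : IsPathFrom src rng l u u) (h : 0 < l.length) :
    IsInfPath src rng (fun i => l[i % l.length]'(Nat.mod_lt _ h)) := by
  intro i
  simpa only [Nat.mod_add_mod] using
    hp.rng_getElem_eq_src_getElem_succ_mod (i % l.length) (Nat.mod_lt _ h)

end IsPathFrom

/-- If `E` is cofinal and no cycle of `E` passes through any vertex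
of `H(v) = {w : v ≥ w}`, then `E` has no cycles at all. -/
theorem no_cycles_of_no_cycles_in_hereditary {V E : Type*} (src rng : E → V)
    (hcof : Cofinal src rng) (v : V)
    (hH : ∀ (u : V) (l : List E), l ≠ [] → IsPathFrom src rng l u u →
      ∀ e ∈ l, ¬ Reaches src rng v (src e)) :
    HasNoCycles src rng := by
  intro u l hne hp
  obtain ⟨i, hi⟩ := hcof v _ (hp.isInfPath_getElem_mod (List.length_pos_iff.mpr hne))
  exact hH u l hne hp _ (List.getElem_mem _) hi
end

section
/- Let E be a cofinal directed graph with no cycles, no sinks, and E⁰ ≠ ∅. Suppose there is no sequence v₁, v₂, … of pairwise distinct vertices of E together with, for each i ∈ ℕ, two distinct paths αᵢ ≠ βᵢ satisfying s(αᵢ) = s(βᵢ) = vᵢ and r(αᵢ) = r(βᵢ) = vᵢ₊₁. Then E contains an infinite path e₁e₂… such that s⁻¹(s(eᵢ)) = {eᵢ} for all i ∈ ℕ. -/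
lemma path_nil {V E : Type*} (src rng : E → V) (v : V) :
    IsPathFrom src rng [] v v := by
  refine ⟨List.isChain_nil, ?_, ?_, fun _ => rfl⟩ <;> simp

lemma path_single {V E : Type*} (src rng : E → V) (e : E) :
    IsPathFrom src rng [e] (src e) (rng e) := by
  refine ⟨List.isChain_singleton e, ?_, ?_, by simp⟩ <;> simp

lemma path_append {V E : Type*} {src rng : E → V} {l l' : List E} {v w x : V}
    (h : IsPathFrom src rng l v w) (h' : IsPathFrom src rng l' w x) :
    IsPathFrom src rng (l ++ l') v x := by
  obtain ⟨hc, hh, hl, he⟩ := h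
  obtain ⟨hc', hh', hl', he'⟩ := h'
  refine ⟨List.isChain_append.2 ⟨hc, hc', ?_⟩, ?_, ?_, ?_⟩
  · intro a ha b hb
    rw [hl a ha, hh' b hb]
  · cases l with
    | nil => simpa [he rfl] using hh'
    | cons a t => simpa using hh
  · cases l' with
    | nil => simpa [he' rfl] using hl
    | cons a t =>
      intro b hb
      rw [List.getLast?_append_of_ne_nil l (by simp)] at hb
      exact hl' b hb
  · intro h0
    rw [List.append_eq_nil_iff] at h0
    exact (he h0.1).trans (he' h0.2)

lemma path_prefix {V E : Type*} {src rng : E → V} {p : ℕ → E}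
    (hp : IsInfPath src rng p) (i : ℕ) :
    IsPathFrom src rng ((List.range i).map p) (src (p 0)) (src (p i)) := by
  induction i with
  | zero => simpa using path_nil src rng (src (p 0))
  | succ n ih =>
      rw [List.range_succ, List.map_append, List.map_singleton]
      refine path_append ih ?_
      have := path_single src rng (p n)
      rwa [hp n] at this

lemma exists_inf_path_start {V E : Type*} (src rng : E → V)
    (hns : ∀ v : V, ¬ IsSink src v) (e₀ : E) :
    ∃ p : ℕ → E, p 0 = e₀ ∧ IsInfPath src rng p := by
  have hedge : ∀ v : V, ∃ e : E, src e = v := by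
    intro v
    have := hns v
    unfold IsSink at this
    push_neg at this
    exact this
  choose nxt hnxt using hedge
  refine ⟨fun n => Nat.rec e₀ (fun _ ih => nxt (rng ih)) n, rfl, fun n => ?_⟩
  exact (hnxt (rng (Nat.rec e₀ (fun _ ih => nxt (rng ih)) n))).symm

/-- A nonempty cofinal graph with no cycles and no sinks, containing no
sequence of pairwise distinct vertices consecutively joined by pairs of distinct paths,
contains an infinite path `e₁e₂…` with `s⁻¹(s(eᵢ)) = {eᵢ}` for all `i`. -/
theorem exists_singly_emitting_infinite_path {V E : Type*} [Nonempty V] (src rng : E → V)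
    (hcof : Cofinal src rng) (hnc : HasNoCycles src rng)
    (hns : ∀ v : V, ¬ IsSink src v)
    (hnoseq : ¬ ∃ v : ℕ → V, Function.Injective v ∧
      ∀ i : ℕ, ∃ α β : List E, α ≠ β ∧
        IsPathFrom src rng α (v i) (v (i + 1)) ∧
        IsPathFrom src rng β (v i) (v (i + 1))) :
    ∃ e : ℕ → E, IsInfPath src rng e ∧
      ∀ i : ℕ, {e' : E | src e' = src (e i)} = {e i} := by
    -- Key claim: some vertex `w` reaches only vertices emitting at most one edge.
  have key : ∃ w : V, ∀ u : V, Reaches src rng w u →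
      ∀ e' f' : E, src e' = u → src f' = u → e' = f' := by
    by_contra hkey
    push_neg at hkey
    have step : ∀ v : V, ∃ w : V, ∃ α β : List E, α ≠ β ∧
        IsPathFrom src rng α v w ∧ IsPathFrom src rng β v w ∧ β ≠ [] := by
      intro v
      obtain ⟨u, ⟨γ, hγ⟩, e, f, he, hf, hef⟩ := hkey v
      obtain ⟨p, hp0, hpinf⟩ := exists_inf_path_start src rng hns e
      obtain ⟨i, δ, hδ⟩ := hcof (rng f) p hpinf
      have hα : IsPathFrom src rng (γ ++ (List.range i).map p) v (src (p i)) := by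
        refine path_append hγ ?_
        have := path_prefix hpinf i
        rwa [hp0, he] at this
      have hβ : IsPathFrom src rng (γ ++ (f :: δ)) v (src (p i)) := by
        refine path_append hγ ?_
        have h1 := path_single src rng f
        rw [hf] at h1
        exact path_append h1 hδ
      refine ⟨src (p i), γ ++ (List.range i).map p, γ ++ (f :: δ), ?_, hα, hβ, by simp⟩
      intro hcontra
      have h1 : (γ ++ (List.range i).map p)[γ.length]? = ((List.range i).map p).head? := by
        rw [List.getElem?_append_right (le_refl _)]
        simp [← List.head?_eq_getElem?]
      have h2 : (γ ++ (f :: δ))[γ.length]? = some f := by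
        rw [List.getElem?_append_right (le_refl _)]
        simp
      rw [hcontra, h2] at h1
      cases i with
      | zero => simp at h1
      | succ n =>
          rw [List.range_succ_eq_map] at h1
          simp [hp0] at h1
          exact hef h1.symm
    choose nxtv α β hne hα hβ hβne using step
    set vs : ℕ → V := fun n => nxtv^[n] (Classical.arbitrary V) with hvs
    have hsucc : ∀ n, vs (n + 1) = nxtv (vs n) := by
      intro n
      simp [hvs, Function.iterate_succ_apply']
    -- nonempty path between vs i and vs j for i < j
    have hreach : ∀ i j, i < j → ∃ l : List E, l ≠ [] ∧ IsPathFrom src rng l (vs i) (vs j) := by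
      intro i j hij
      induction j with
      | zero => omega
      | succ n ih =>
          rcases Nat.lt_succ_iff_lt_or_eq.1 hij with h | h
          · obtain ⟨l, hlne, hl⟩ := ih h
            refine ⟨l ++ β (vs n), by simp [hlne], ?_⟩
            rw [hsucc n]
            exact path_append hl (hβ (vs n))
          · subst h
            refine ⟨β (vs i), hβne (vs i), ?_⟩
            rw [hsucc i]
            exact hβ (vs i)
    have hinj : Function.Injective vs := by
      intro i j hij
      by_contra hne'
      rcases lt_or_gt_of_ne hne' with h | h
      · obtain ⟨l, hlne, hl⟩ := hreach i j h
        rw [hij] at hl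
        exact hnc (vs j) l hlne hl
      · obtain ⟨l, hlne, hl⟩ := hreach j i h
        rw [← hij] at hl
        exact hnc (vs i) l hlne hl
    exact hnoseq ⟨vs, hinj, fun i => by
      rw [hsucc i]
      exact ⟨α (vs i), β (vs i), hne (vs i), hα (vs i), hβ (vs i)⟩⟩
  obtain ⟨w, hw⟩ := key
  have hedge : ∃ e : E, src e = w := by
    have := hns w
    unfold IsSink at this
    push_neg at this
    exact this
  obtain ⟨e₀, he₀⟩ := hedge
  obtain ⟨p, hp0, hpinf⟩ := exists_inf_path_start src rng hns e₀
  refine ⟨p, hpinf, fun i => ?_⟩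
  have hreach : Reaches src rng w (src (p i)) := by
    refine ⟨(List.range i).map p, ?_⟩
    have := path_prefix hpinf i
    rwa [hp0, he₀] at this
  ext e'
  simp only [Set.mem_setOf_eq, Set.mem_singleton_iff]
  constructor
  · intro h
    exact hw (src (p i)) hreach e' (p i) h rfl
  · intro h
    rw [h]
end

section
/- Let E be a directed graph with E⁰ ≠ ∅ and no cycles, such that E is cofinal, every vertex of E can reach every singular vertex of E, and there is no sequence v₁, v₂, … of pairwise distinct vertices of E together with, for each i ∈ ℕ, two distinct paths αᵢ ≠ βᵢ satisfying s(αᵢ) = s(βᵢ) = vᵢ and r(αᵢ) = r(βᵢ) = vᵢ₊₁. Then exactly one of the following holds: (1) E has exactly one sink and no infinite paths; or (2) E has no sinks and E contains an infinite path e₁e₂… with s⁻¹(s(eᵢ)) = {eᵢ} for all i ∈ ℕ. -/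
/-!
If the graph has no infinite path, following out-edges from any vertex must stop, so there is a
sink; since every vertex reaches every sink and a sink reaches only itself, it is unique.

If there is an infinite path, cofinality forbids sinks (a sink reaches only itself, so it would
lie on the path). Moreover some vertex `v₀` reaches no vertex emitting two edges: otherwise, two
edges `f ≠ g` out of a vertex `w` extend, by cofinality, to two distinct paths from `w` to a common
vertex, and iterating produces a sequence of vertices joined by pairs of distinct paths, pairwise
distinct because the graph has no cycles. Every infinite path starting at `v₀` then has the
required property.
-/

section

variable {V E : Type*} {src rng : E → V}

theorem isPathFrom_nil (src rng : E → V) (v : V) : IsPathFrom src rng [] v v :=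
  ⟨List.isChain_nil, by simp, by simp, fun _ => rfl⟩

theorem isPathFrom_cons_iff {f : E} {l : List E} {v w : V} :
    IsPathFrom src rng (f :: l) v w ↔ src f = v ∧ IsPathFrom src rng l (rng f) w := by
  cases l with
  | nil => simp [IsPathFrom, List.Chain']
  | cons g l' => simp [IsPathFrom, List.Chain', List.isChain_cons_cons, eq_comm, and_assoc, and_left_comm]

theorem IsPathFrom.append {l l' : List E} {v w x : V} (h : IsPathFrom src rng l v w)
    (h' : IsPathFrom src rng l' w x) : IsPathFrom src rng (l ++ l') v x := by
  induction l generalizing v with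
  | nil => obtain rfl := h.2.2.2 rfl; exact h'
  | cons f t ih =>
    rw [isPathFrom_cons_iff] at h
    exact isPathFrom_cons_iff.mpr ⟨h.1, ih h.2⟩

theorem Reaches.refl (src rng : E → V) (v : V) : Reaches src rng v v :=
  ⟨[], isPathFrom_nil src rng v⟩

theorem Reaches.trans {v w x : V} (h : Reaches src rng v w) (h' : Reaches src rng w x) :
    Reaches src rng v x :=
  let ⟨l, hl⟩ := h
  let ⟨l', hl'⟩ := h'
  ⟨l ++ l', hl.append hl'⟩

theorem Reaches.of_edge (f : E) : Reaches src rng (src f) (rng f) :=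
  ⟨[f], isPathFrom_cons_iff.mpr ⟨rfl, isPathFrom_nil src rng _⟩⟩

theorem not_isSink_iff {v : V} : ¬ IsSink src v ↔ ∃ f, src f = v := by
  simp [IsSink]

theorem IsSink.eq_of_isPathFrom {l : List E} {v w : V} (hv : IsSink src v)
    (h : IsPathFrom src rng l v w) : v = w := by
  cases l with
  | nil => exact h.2.2.2 rfl
  | cons f _ => exact absurd (h.2.1 f rfl) (hv f)

theorem IsSink.eq_of_reaches {v w : V} (hv : IsSink src v) (h : Reaches src rng v w) : v = w :=
  let ⟨_, hl⟩ := h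
  hv.eq_of_isPathFrom hl

theorem IsInfPath.reaches {e : ℕ → E} (he : IsInfPath src rng e) {i j : ℕ} (hij : i ≤ j) :
    Reaches src rng (src (e i)) (src (e j)) := by
  induction j, hij using Nat.le_induction with
  | base => exact .refl src rng _
  | succ j _ ih => exact ih.trans (he j ▸ .of_edge (e j))

theorem exists_isInfPath_of_forall_not_isSink (hns : ∀ u : V, ¬ IsSink src u) (v : V) :
    ∃ e : ℕ → E, IsInfPath src rng e ∧ src (e 0) = v := by
  choose out hout using fun u => not_isSink_iff.mp (hns u)
  refine ⟨fun n => out ((rng ∘ out)^[n] v), fun i => ?_, hout v⟩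
  rw [hout, Function.iterate_succ_apply']
  rfl

theorem existsUnique_isSink_of_not_exists_isInfPath [Nonempty V]
    (hreach : ∀ v w : V, IsSink src w → Reaches src rng v w)
    (hinf : ¬ ∃ e : ℕ → E, IsInfPath src rng e) :
    ∃! v : V, IsSink src v := by
  have ⟨w, hw⟩ : ∃ w : V, IsSink src w := by
    by_contra! hns
    obtain ⟨e, he, -⟩ := exists_isInfPath_of_forall_not_isSink hns (Classical.arbitrary V)
    exact hinf ⟨e, he⟩
  exact ⟨w, hw, fun v hv => hv.eq_of_reaches (hreach v w hw)⟩

theorem Cofinal.not_isSink (hcof : Cofinal src rng) {e : ℕ → E} (he : IsInfPath src rng e)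
    (v : V) : ¬ IsSink src v := fun hv =>
  let ⟨i, hi⟩ := hcof v e he
  hv (e i) (hv.eq_of_reaches hi).symm

def ParallelPaths (src rng : E → V) (v w : V) : Prop :=
  ∃ α β : List E, α ≠ β ∧ IsPathFrom src rng α v w ∧ IsPathFrom src rng β v w

theorem ParallelPaths.exists_ne_nil {v w : V} (h : ParallelPaths src rng v w) :
    ∃ l : List E, l ≠ [] ∧ IsPathFrom src rng l v w := by
  obtain ⟨α, β, hαβ, hα, hβ⟩ := h
  by_cases hα_nil : α = []
  · exact ⟨β, fun hβ_nil => hαβ (hα_nil.trans hβ_nil.symm), hβ⟩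
  · exact ⟨α, hα_nil, hα⟩

theorem ParallelPaths.of_reaches {u v w : V} (huv : Reaches src rng u v)
    (h : ParallelPaths src rng v w) : ParallelPaths src rng u w := by
  obtain ⟨l, hl⟩ := huv
  obtain ⟨α, β, hαβ, hα, hβ⟩ := h
  exact ⟨l ++ α, l ++ β, fun h => hαβ (List.append_cancel_left h), hl.append hα, hl.append hβ⟩

theorem Cofinal.exists_parallelPaths (hcof : Cofinal src rng) (hns : ∀ u : V, ¬ IsSink src u)
    {f g : E} (hfg : f ≠ g) (hsrc : src f = src g) : ∃ x, ParallelPaths src rng (src f) x := by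
  obtain ⟨p, hp, hp0⟩ := exists_isInfPath_of_forall_not_isSink hns (rng f)
  obtain ⟨i, m, hm⟩ := hcof (rng g) p hp
  obtain ⟨q, hq⟩ := hp0 ▸ hp.reaches (Nat.zero_le i)
  refine ⟨src (p i), f :: q, g :: m, fun h => hfg (List.cons.inj h).1, ?_, ?_⟩
  · exact isPathFrom_cons_iff.mpr ⟨rfl, hq⟩
  · exact isPathFrom_cons_iff.mpr ⟨hsrc.symm, hm⟩

theorem HasNoCycles.injective_of_path_succ {v : ℕ → V} (hnc : HasNoCycles src rng)
    (h : ∀ n, ∃ l : List E, l ≠ [] ∧ IsPathFrom src rng l (v n) (v (n + 1))) :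
    Function.Injective v := by
  let R (a b : V) : Prop := ∃ l : List E, l ≠ [] ∧ IsPathFrom src rng l a b
  have : IsTrans V R :=
    ⟨fun _ _ _ ⟨l, hl, hp⟩ ⟨l', _, hp'⟩ => ⟨l ++ l', by simp [hl], hp.append hp'⟩⟩
  refine .of_lt_imp_ne fun a b hab hv => ?_
  obtain ⟨l, hl, hp⟩ := Nat.rel_of_forall_rel_succ_of_lt R h hab
  exact hnc _ l hl (hv ▸ hp)

theorem HasNoCycles.exists_injective_parallelPaths [Nonempty V] (hnc : HasNoCycles src rng)
    (h : ∀ u : V, ∃ w, ParallelPaths src rng u w) :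
    ∃ v : ℕ → V, Function.Injective v ∧ ∀ i, ParallelPaths src rng (v i) (v (i + 1)) := by
  choose next hnext using h
  have hstep (i : ℕ) : ParallelPaths src rng (next^[i] (Classical.arbitrary V))
      (next^[i + 1] (Classical.arbitrary V)) := by
    rw [Function.iterate_succ_apply']
    exact hnext _
  exact ⟨_, hnc.injective_of_path_succ fun i => (hstep i).exists_ne_nil, hstep⟩

theorem exists_forall_reaches_subsingleton [Nonempty V] (hnc : HasNoCycles src rng)
    (hcof : Cofinal src rng) (hns : ∀ u : V, ¬ IsSink src u)
    (hnoseq : ¬ ∃ v : ℕ → V, Function.Injective v ∧ ∀ i, ParallelPaths src rng (v i) (v (i + 1))) :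
    ∃ v₀ : V, ∀ w, Reaches src rng v₀ w → {f : E | src f = w}.Subsingleton := by
  by_contra! hsplit
  refine hnoseq (hnc.exists_injective_parallelPaths fun u => ?_)
  obtain ⟨w, huw, f, rfl, g, hg, hfg⟩ := hsplit u
  obtain ⟨x, hx⟩ := hcof.exists_parallelPaths hns hfg hg.symm
  exact ⟨x, hx.of_reaches huw⟩

theorem IsInfPath.src_preimage_eq_singleton {e : ℕ → E} (he : IsInfPath src rng e)
    (hsub : ∀ w, Reaches src rng (src (e 0)) w → {f : E | src f = w}.Subsingleton) (i : ℕ) :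
    {f : E | src f = src (e i)} = {e i} :=
  (hsub _ (he.reaches (Nat.zero_le i))).eq_singleton_of_mem rfl

end

/-- dichotomy: a nonempty graph with no cycles that is cofinal, in which
every vertex reaches every singular vertex, and which contains no sequence of pairwise
distinct vertices consecutively joined by pairs of distinct paths, either has exactly
one sink and no infinite paths, or has no sinks and contains an infinite path
`e₁e₂…` with `s⁻¹(s(eᵢ)) = {eᵢ}` for all `i` — and not both. -/
theorem sink_or_tail_dichotomy {V E : Type*} [Nonempty V] (src rng : E → V)
    (hnc : HasNoCycles src rng) (hcof : Cofinal src rng)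
    (hreach : ∀ v w : V, IsSingular src w → Reaches src rng v w)
    (hnoseq : ¬ ∃ v : ℕ → V, Function.Injective v ∧
      ∀ i : ℕ, ∃ α β : List E, α ≠ β ∧
        IsPathFrom src rng α (v i) (v (i + 1)) ∧
        IsPathFrom src rng β (v i) (v (i + 1))) :
    Xor'
      ((∃! v : V, IsSink src v) ∧ ¬ ∃ e : ℕ → E, IsInfPath src rng e)
      ((∀ v : V, ¬ IsSink src v) ∧ ∃ e : ℕ → E, IsInfPath src rng e ∧
        ∀ i : ℕ, {e' : E | src e' = src (e i)} = {e i}) := by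
  by_cases hinf : ∃ e : ℕ → E, IsInfPath src rng e
  · obtain ⟨e, he⟩ := hinf
    have hns := hcof.not_isSink he
    obtain ⟨v₀, hv₀⟩ := exists_forall_reaches_subsingleton hnc hcof hns hnoseq
    obtain ⟨p, hp, rfl⟩ := exists_isInfPath_of_forall_not_isSink (rng := rng) hns v₀
    exact Or.inr ⟨⟨hns, p, hp, hp.src_preimage_eq_singleton hv₀⟩, fun h => h.2 ⟨e, he⟩⟩
  · have hsink := existsUnique_isSink_of_not_exists_isInfPath
      (fun v w hw => hreach v w (Or.inl hw)) hinf
    exact Or.inl ⟨⟨hsink, hinf⟩, fun ⟨_, p, hp, _⟩ => hinf ⟨p, hp⟩⟩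
end

section
/- Let E be a cofinal directed graph containing an infinite path e₁e₂… with s⁻¹(s(eᵢ)) = {eᵢ} for all i ∈ ℕ. Then every infinite path μ in E has the form μ = α e_j e_{j+1} e_{j+2} … for some finite path α and some j ∈ ℕ; that is, some tail of μ coincides with a tail of e₁e₂…. -/
/-!
Since each vertex `s(eₙ)` emits only `eₙ`, every path leaving `s(e₀)` is forced to follow
`e₀e₁…`; in particular it ends at some `s(eⱼ)`. By cofinality `s(e₀)` reaches a vertex `s(μᵢ)` of
`μ`, so `s(μᵢ) = s(eⱼ)`, and from there on `μ` too is forced to follow `e`.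
-/

theorem IsPathFrom.of_cons {V E : Type*} {src rng : E → V} {a : E} {l : List E} {v w : V}
    (h : IsPathFrom src rng (a :: l) v w) : src a = v ∧ IsPathFrom src rng l (rng a) w := by
  obtain ⟨hchain, hhead, hlast, -⟩ := h
  rw [List.Chain', List.isChain_cons] at hchain
  refine ⟨hhead a rfl, hchain.2, fun f hf => (hchain.1 f hf).symm, fun f hf => hlast f ?_,
    fun hl => hlast a (by simp [hl])⟩
  cases l with
  | nil => simp at hf
  | cons b t => simpa [List.getLast?_cons_cons] using hf

section ForcedPath

variable {V E : Type*} {src rng : E → V} {e : ℕ → E}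

theorem IsPathFrom.eq_src_of_forced (he : IsInfPath src rng e)
    (hforced : ∀ n f, src f = src (e n) → f = e n) {l : List E} {n : ℕ} {w : V}
    (h : IsPathFrom src rng l (src (e n)) w) : w = src (e (n + l.length)) := by
  induction l generalizing n with
  | nil => simpa using (h.2.2.2 rfl).symm
  | cons a l ih =>
    obtain ⟨hsrc, htail⟩ := h.of_cons
    rw [hforced n a hsrc, he n] at htail
    rw [ih htail, List.length_cons, Nat.add_comm l.length, Nat.add_assoc]

theorem IsInfPath.eq_shift_of_src_eq {μ : ℕ → E} (hμ : IsInfPath src rng μ)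
    (he : IsInfPath src rng e) (hforced : ∀ n f, src f = src (e n) → f = e n) {i n : ℕ}
    (h : src (μ i) = src (e n)) (k : ℕ) : μ (i + k) = e (n + k) := by
  induction k with
  | zero => exact hforced n _ h
  | succ k ih =>
    exact hforced (n + k + 1) _ (by rw [← Nat.add_assoc, ← hμ (i + k), ih, he (n + k)])

end ForcedPath

/-- In a cofinal graph containing an infinite path `e₁e₂…` with
`s⁻¹(s(eᵢ)) = {eᵢ}` for all `i`, every infinite path `μ` has the form
`μ = α e_j e_{j+1} …` for some finite path `α` (an initial segment of `μ`) and
some `j`; in particular some tail of `μ` coincides with a tail of `e₁e₂…`. -/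
theorem infinite_paths_share_tail {V E : Type*} (src rng : E → V)
    (hcof : Cofinal src rng) (e : ℕ → E) (he : IsInfPath src rng e)
    (huniq : ∀ i : ℕ, {e' : E | src e' = src (e i)} = {e i}) :
    ∀ μ : ℕ → E, IsInfPath src rng μ →
      ∃ (j : ℕ) (α : List E),
        (∀ (i : ℕ) (hi : i < α.length), μ i = α.get ⟨i, hi⟩) ∧
        (∀ i : ℕ, μ (α.length + i) = e (j + i)) := by
  have hforced : ∀ n f, src f = src (e n) → f = e n := fun n f hf =>
    (Set.ext_iff.mp (huniq n) f).mp hf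
  intro μ hμ
  obtain ⟨i, l, hl⟩ := hcof (src (e 0)) μ hμ
  have hsrc : src (μ i) = src (e l.length) := by
    simpa using hl.eq_src_of_forced he hforced
  refine ⟨l.length, List.ofFn fun k : Fin i => μ k, fun k hk => by simp, fun k => ?_⟩
  simpa using hμ.eq_shift_of_src_eq he hforced hsrc k
end
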